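/- Let (R, m) be a Noetherian local Gorenstein ring of prime characteristic p and dimension d. If the map H^d_m(R) → H^d_m(F_*R) induced by Frobenius is injective, then R is F-pure, i.e., the Frobenius map R → F_*R is a pure map of R-modules. -/

import Mathlib

/-!
Write `E = H^d_𝔪(R)`. Being injective and containing a copy of `R/𝔪`, `E` detects every
nonzero element `a` of every module `P` through some map `P → E`; so if `a ⊗ F(1) = 0` in
`P ⊗ F_*R` with `a ≠ 0`, there is `e ≠ 0` in `E` with `e ⊗ F(1) = 0` in `E ⊗ F_*R`. Since
`H^d_𝔪` is `R`-linear, `e ⊗ m ↦ H^d_𝔪(r ↦ r m)(e)` is a well-defined map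
`E ⊗ F_*R → H^d_𝔪(F_*R)`; it sends `e ⊗ F(1)` to `H^d_𝔪(F)(e)`, which is nonzero by hypothesis.
-/

universe u

variable (p : ℕ) (R : Type u) [CommRing R] [Fact p.Prime] [CharP R p]

/-- `F_* R`: the ring `R` viewed as a module over itself via the Frobenius `x ↦ x ^ p`. -/
def FStar (p : ℕ) (R : Type u) : Type u := R

instance : AddCommGroup (FStar p R) := inferInstanceAs (AddCommGroup R)

instance : Module R (FStar p R) := Module.compHom R (frobenius R p)

/-- The Frobenius `R → F_* R`, `x ↦ x ^ p`, as an `R`-linear map. -/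
def frobeniusLinear : R →ₗ[R] FStar p R where
  toFun x := frobenius R p x
  map_add' x y := map_add (frobenius R p) x y
  map_smul' r x := map_mul (frobenius R p) r x

/-- A ring `R` of characteristic `p` is *F-pure* if the Frobenius `R → F_* R` is a pure map
of `R`-modules, i.e. stays injective after tensoring with every `R`-module. -/
def IsFPure : Prop :=
  ∀ (P : Type u) [AddCommGroup P] [Module R P],
    Function.Injective (LinearMap.lTensor P (frobeniusLinear p R))

/-- A Noetherian local ring `(R, 𝔪)` of dimension `d` is *Gorenstein* iff its local cohomology
satisfies `H^i_𝔪(R) = 0` for `i ≠ d` and `H^d_𝔪(R)` is an injective hull of the residue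
field `R/𝔪` (Grothendieck's characterization of Gorenstein local rings); we take this
characterization as the definition.  Here "injective hull" means: an injective `R`-module
together with an injective map from `R/𝔪` whose image is an essential submodule. -/
def IsGorensteinLocalOfDim (R : Type u) [CommRing R] [IsLocalRing R] (d : ℕ) : Prop :=
  IsNoetherianRing R ∧ ringKrullDim R = d ∧
    (∀ i : ℕ, i ≠ d →
      Subsingleton ((localCohomology (IsLocalRing.maximalIdeal R) i).obj (ModuleCat.of R R))) ∧
    Module.Injective R ((localCohomology (IsLocalRing.maximalIdeal R) d).obj (ModuleCat.of R R)) ∧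
    ∃ ι : (R ⧸ IsLocalRing.maximalIdeal R) →ₗ[R]
        ((localCohomology (IsLocalRing.maximalIdeal R) d).obj (ModuleCat.of R R)),
      Function.Injective ι ∧
        ∀ S : Submodule R ((localCohomology (IsLocalRing.maximalIdeal R) d).obj
          (ModuleCat.of R R)), S ≠ ⊥ → S ⊓ LinearMap.range ι ≠ ⊥
universe v

open CategoryTheory Limits TensorProduct

instance HomologicalComplex.homologyFunctor_linear {S : Type*} [Semiring S] {C : Type*}
    [Category C] [Preadditive C] [Linear S C] [CategoryWithHomology C] {ι : Type*}
    (c : ComplexShape ι) (i : ι) : (homologyFunctor C c i).Linear S where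
  map_smul φ r := ShortComplex.homologyMap_smul ((shortComplexFunctor C c i).map φ) r

namespace CategoryTheory

section Opposite

variable {S : Type*} [Semiring S] {C : Type*} [Category C] [Preadditive C] [Linear S C]

instance (X Y : Cᵒᵖ) : SMul S (X ⟶ Y) :=
  ⟨fun r f => (r • f.unop).op⟩

instance Linear.opposite : Linear S Cᵒᵖ where
  homModule _ _ :=
    { one_smul _ := Quiver.Hom.unop_inj (one_smul S _)
      mul_smul _ _ _ := Quiver.Hom.unop_inj (mul_smul _ _ _)
      smul_zero _ := Quiver.Hom.unop_inj (smul_zero _)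
      smul_add _ _ _ := Quiver.Hom.unop_inj (smul_add _ _ _)
      add_smul _ _ _ := Quiver.Hom.unop_inj (add_smul _ _ _)
      zero_smul _ := Quiver.Hom.unop_inj (zero_smul S _) }
  smul_comp _ _ _ _ _ _ := Quiver.Hom.unop_inj (Linear.comp_smul _ _ _ _ _ _)
  comp_smul _ _ _ _ _ _ := Quiver.Hom.unop_inj (Linear.smul_comp _ _ _ _ _ _)

end Opposite

section LeftDerived

variable {C D : Type*} [Category C] [Category D] [Abelian C] [HasProjectiveResolutions C]
  [Abelian D] {F G : C ⥤ D} [F.Additive] [G.Additive]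

lemma NatTrans.leftDerived_add (α β : F ⟶ G) (n : ℕ) :
    NatTrans.leftDerived (α + β) n = NatTrans.leftDerived α n + NatTrans.leftDerived β n := by
  ext X
  obtain ⟨P⟩ : Nonempty (ProjectiveResolution X) := HasProjectiveResolution.out
  have hmap : (NatTrans.mapHomologicalComplex (α + β) _).app P.complex =
      (NatTrans.mapHomologicalComplex α _).app P.complex +
        (NatTrans.mapHomologicalComplex β _).app P.complex := rfl
  rw [NatTrans.app_add, ProjectiveResolution.leftDerived_app_eq _ P,
    ProjectiveResolution.leftDerived_app_eq _ P, ProjectiveResolution.leftDerived_app_eq _ P,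
    hmap, Functor.map_add, Preadditive.add_comp, Preadditive.comp_add]

lemma NatTrans.leftDerived_smul {S : Type*} [Semiring S] [Linear S D] (r : S) (α : F ⟶ G)
    (n : ℕ) : NatTrans.leftDerived (r • α) n = r • NatTrans.leftDerived α n := by
  ext X
  obtain ⟨P⟩ : Nonempty (ProjectiveResolution X) := HasProjectiveResolution.out
  have hmap : (NatTrans.mapHomologicalComplex (r • α) _).app P.complex =
      r • (NatTrans.mapHomologicalComplex α _).app P.complex := rfl
  rw [NatTrans.app_smul, ProjectiveResolution.leftDerived_app_eq _ P,
    ProjectiveResolution.leftDerived_app_eq _ P, hmap, Functor.map_smul, Linear.smul_comp,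
    Linear.comp_smul]

end LeftDerived

section Colimit

variable {J K E : Type*} [Category J] [Category K] [Category E] [Preadditive K] [Preadditive E]
  [HasColimitsOfShape J E] (H : J ⥤ K ⥤ E)

instance Limits.colimit_additive [∀ j, (H.obj j).Additive] : (colimit H).Additive where
  map_add {_ _ f g} := colimit_obj_ext fun j => by
    simp only [Preadditive.comp_add, ← NatTrans.naturality, Functor.map_add,
      Preadditive.add_comp]

instance Limits.colimit_linear {S : Type*} [Semiring S] [Linear S K] [Linear S E]
    [∀ j, (H.obj j).Linear S] : (colimit H).Linear S where
  map_smul {_ _} f r := colimit_obj_ext fun j => by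
    simp only [Linear.comp_smul, ← NatTrans.naturality, Functor.map_smul, Linear.smul_comp]

end Colimit

end CategoryTheory

section Ext

variable {R : Type*} {C : Type*} [Category C] [Abelian C] [EnoughProjectives C]

instance Ext.obj_additive [Ring R] [Linear R C] (n : ℕ) (X : Cᵒᵖ) :
    ((Ext R C n).obj X).Additive where
  map_add {_ _ f g} := by
    have h : NatTrans.rightOp ((linearYoneda R C).map (f + g)) =
        NatTrans.rightOp ((linearYoneda R C).map f) +
          NatTrans.rightOp ((linearYoneda R C).map g) := by
      ext Z : 2
      apply Quiver.Hom.unop_inj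
      ext φ
      exact Preadditive.comp_add _ _ _ φ f g
    change ((NatTrans.leftDerived (NatTrans.rightOp ((linearYoneda R C).map (f + g))) n).app
      X.unop).unop = _
    rw [h, NatTrans.leftDerived_add]
    rfl

instance Ext.obj_linear [CommRing R] [Linear R C] (n : ℕ) (X : Cᵒᵖ) :
    ((Ext R C n).obj X).Linear R where
  map_smul {_ _} f r := by
    have h : NatTrans.rightOp ((linearYoneda R C).map (r • f)) =
        r • NatTrans.rightOp ((linearYoneda R C).map f) := by
      ext Z : 2
      apply Quiver.Hom.unop_inj
      ext φ
      exact Linear.comp_smul _ _ _ φ r f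
    change ((NatTrans.leftDerived (NatTrans.rightOp ((linearYoneda R C).map (r • f))) n).app
      X.unop).unop = _
    rw [h, NatTrans.leftDerived_smul]
    rfl

end Ext

section LocalCohomology

open localCohomology

variable {R : Type u} [CommRing R] (J : Ideal R) (i : ℕ)

instance localCohomology.additive : (localCohomology J i).Additive :=
  have (j : ℕᵒᵖᵒᵖ) : ((diagram (idealPowersDiagram J) i).obj j).Additive :=
    Ext.obj_additive ..
  colimit_additive _

instance localCohomology.linear : (localCohomology J i).Linear R :=
  have (j : ℕᵒᵖᵒᵖ) : ((diagram (idealPowersDiagram J) i).obj j).Linear R :=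
    Ext.obj_linear ..
  colimit_linear _

end LocalCohomology

lemma CategoryTheory.Functor.injective_tmul_of_injective_map {R : Type u} [CommRing R]
    (F : ModuleCat.{u} R ⥤ ModuleCat.{u} R) [F.Additive] [F.Linear R] {N : Type u}
    [AddCommGroup N] [Module R N] (f : R →ₗ[R] N)
    (hf : Function.Injective (F.map (ModuleCat.ofHom f))) :
    Function.Injective fun e : F.obj (ModuleCat.of R R) => e ⊗ₜ[R] f 1 := by
  -- `B n = F(r ↦ r • n)`; it is linear in `n` because `F` is `R`-linear.
  let B : N →ₗ[R] F.obj (ModuleCat.of R R) →ₗ[R] F.obj (ModuleCat.of R N) :=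
    ModuleCat.homLinearEquiv.toLinearMap ∘ₗ F.mapLinearMap R ∘ₗ
      ModuleCat.homLinearEquiv.symm.toLinearMap ∘ₗ
        (LinearMap.ringLmapEquivSelf R R N).symm.toLinearMap
  have hB : lift B.flip ∘ (fun e => e ⊗ₜ[R] f 1) = F.map (ModuleCat.ofHom f) := by
    ext e
    have hf1 : (LinearMap.ringLmapEquivSelf R R N).symm (f 1) = f :=
      (LinearMap.ringLmapEquivSelf R R N).symm_apply_apply f
    simp only [B, Function.comp_apply, lift.tmul, LinearMap.flip_apply, LinearMap.coe_comp,
      LinearEquiv.coe_coe, hf1]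
    rfl
  exact Function.Injective.of_comp (hB ▸ hf)

section Tensor

variable {R : Type*} [CommRing R] {P N : Type*} [AddCommGroup P] [Module R P]
  [AddCommGroup N] [Module R N]

lemma LinearMap.injective_lTensor_iff_injective_tmul (f : R →ₗ[R] N) :
    Function.Injective (LinearMap.lTensor P f) ↔
      Function.Injective fun a : P => a ⊗ₜ[R] f 1 := by
  have h : LinearMap.lTensor P f =
      (TensorProduct.mk R P N).flip (f 1) ∘ₗ TensorProduct.rid R P := by
    ext a
    simp
  rw [h, LinearMap.coe_comp, LinearEquiv.coe_coe, EquivLike.injective_comp]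
  rfl

lemma TensorProduct.injective_tmul_of_separating {E : Type*} [AddCommGroup E] [Module R E]
    (n : N) (hE : Function.Injective fun e : E => e ⊗ₜ[R] n)
    (hsep : ∀ a : P, a ≠ 0 → ∃ φ : P →ₗ[R] E, φ a ≠ 0) :
    Function.Injective fun a : P => a ⊗ₜ[R] n := by
  refine (injective_iff_map_eq_zero ((mk R P N).flip n)).2 fun a ha => ?_
  by_contra ha0
  obtain ⟨φ, hφ⟩ := hsep a ha0
  refine hφ (hE ?_)
  simpa using congrArg (LinearMap.rTensor N φ) ha

end Tensor

section Injective

variable {R : Type u} [CommRing R] {E : Type v} [AddCommGroup E] [Module R E] [Small.{v} R]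
  [Module.Injective R E] {P : Type*} [AddCommGroup P] [Module R P]

lemma Module.Injective.exists_linearMap_apply_eq {a : P} {e : E}
    (h : Ideal.torsionOf R P a ≤ Ideal.torsionOf R E e) : ∃ φ : P →ₗ[R] E, φ a = e := by
  let g : (R ⧸ Ideal.torsionOf R P a) →ₗ[R] E :=
    (Ideal.torsionOf R P a).liftQ (LinearMap.toSpanSingleton R E e) h
  let ι : (R ⧸ Ideal.torsionOf R P a) →ₗ[R] P :=
    (R ∙ a).subtype ∘ₗ (Ideal.quotTorsionOfEquivSpanSingleton R P a).toLinearMap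
  have hι : Function.Injective ι :=
    (R ∙ a).injective_subtype.comp (Ideal.quotTorsionOfEquivSpanSingleton R P a).injective
  obtain ⟨φ, hφ⟩ := Module.Injective.extension_property R _ _ _ ι hι g
  refine ⟨φ, ?_⟩
  have := LinearMap.congr_fun hφ (Submodule.Quotient.mk 1)
  simp only [ι, g, LinearMap.comp_apply, LinearEquiv.coe_coe,
    Ideal.quotTorsionOfEquivSpanSingleton_apply_mk, one_smul, Submodule.subtype_apply] at this
  exact this.trans (one_smul R e)

lemma IsLocalRing.exists_linearMap_apply_ne_zero [IsLocalRing R]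
    {ι : (R ⧸ IsLocalRing.maximalIdeal R) →ₗ[R] E} (hι : Function.Injective ι)
    {a : P} (ha : a ≠ 0) : ∃ φ : P →ₗ[R] E, φ a ≠ 0 := by
  have hle : Ideal.torsionOf R P a ≤ Ideal.torsionOf R E (ι 1) := by
    have hne : Ideal.torsionOf R P a ≠ ⊤ := (Ideal.torsionOf_eq_top_iff (R := R) a).not.2 ha
    refine (IsLocalRing.le_maximalIdeal hne).trans fun r hr => ?_
    rw [Ideal.mem_torsionOf_iff, ← map_smul, Algebra.smul_def, mul_one,
      Ideal.Quotient.algebraMap_eq, Ideal.Quotient.eq_zero_iff_mem.2 hr, map_zero]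
  obtain ⟨φ, hφ⟩ := Module.Injective.exists_linearMap_apply_eq hle
  exact ⟨φ, hφ ▸ (map_ne_zero_iff ι hι).2 one_ne_zero⟩

end Injective

theorem fPure_of_injective_on_top_localCohomology
    [IsLocalRing R] (d : ℕ)
    (hGor : IsGorensteinLocalOfDim R d)
    (hinj : Function.Injective
      ((localCohomology (IsLocalRing.maximalIdeal R) d).map
        (ModuleCat.ofHom (frobeniusLinear p R)))) :
    IsFPure p R := by
  obtain ⟨-, -, -, hE, ι, hι, -⟩ := hGor
  intro P _ _
  rw [LinearMap.injective_lTensor_iff_injective_tmul]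
  exact TensorProduct.injective_tmul_of_separating _
    ((localCohomology _ d).injective_tmul_of_injective_map _ hinj)
    fun _ ha => IsLocalRing.exists_linearMap_apply_ne_zero hι ha
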